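/- arXiv:2206.01675 — 2 statements merged into one kernel-verified Lean document; each statement's English description precedes it below -/
import Mathlib

section
/- (DRO safety factor dominates the Gaussian quantile) For every ε ∈ (0, 1/2), √((1-ε)/ε) ≥ Φ⁻¹(1-ε), where Φ⁻¹ is the inverse cumulative distribution function of the standard normal distribution. Hence the distributionally robust reformulation of a chance constraint is at least as conservative as the reformulation under the Gaussian assumption. -/
open MeasureTheory ProbabilityTheory

open Real in
private lemma tail_exp_integral {t : ℝ} (ht : 0 < t) :
    ∫ x in Set.Ioi t, x * rexp (-x ^ 2 / 2) = rexp (-t ^ 2 / 2) := by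
  have hderiv : ∀ x ∈ Set.Ici t,
      HasDerivAt (fun x : ℝ => -rexp (-x ^ 2 / 2)) (x * rexp (-x ^ 2 / 2)) x := by
    intro x _
    have hg : HasDerivAt (fun x : ℝ => -x ^ 2 / 2) (-x) x := by
      have h := ((hasDerivAt_pow 2 x).neg).div_const 2
      exact h.congr_deriv (by norm_num; ring)
    have := hg.exp.neg
    exact this.congr_deriv (by ring)
  have hint : IntegrableOn (fun x : ℝ => x * rexp (-x ^ 2 / 2)) (Set.Ioi t) := by
    have : Integrable (fun x : ℝ => x * rexp (-(1/2 : ℝ) * x ^ 2)) :=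
      integrable_mul_exp_neg_mul_sq (by norm_num)
    refine (this.congr ?_).restrict
    filter_upwards with x
    ring_nf
  have hlim : Filter.Tendsto (fun x : ℝ => -rexp (-x ^ 2 / 2)) Filter.atTop (nhds 0) := by
    rw [show (0 : ℝ) = -0 by ring]
    refine Filter.Tendsto.neg ?_
    have : Filter.Tendsto (fun x : ℝ => -x ^ 2 / 2) Filter.atTop Filter.atBot := by
      apply Filter.Tendsto.atBot_div_const (by norm_num)
      exact Filter.tendsto_neg_atTop_atBot.comp (Filter.tendsto_pow_atTop two_ne_zero)
    exact Real.tendsto_exp_atBot.comp this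
  have h := integral_Ioi_of_hasDerivAt_of_tendsto' hderiv hint hlim
  rw [h]
  simp

open Real in
private lemma gauss_tail_le {t : ℝ} (ht : 0 < t) :
    ∫ x in Set.Ioi t, gaussianPDFReal 0 1 x ≤ 1 / (2 * t ^ 2) := by
  have hpdf : ∀ x : ℝ, gaussianPDFReal 0 1 x = (√(2 * π))⁻¹ * rexp (-x ^ 2 / 2) := by
    intro x; simp [gaussianPDFReal]
  have h1 : ∫ x in Set.Ioi t, gaussianPDFReal 0 1 x
      ≤ ∫ x in Set.Ioi t, (x / t) * ((√(2 * π))⁻¹ * rexp (-x ^ 2 / 2)) := by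
    refine setIntegral_mono_on ?_ ?_ measurableSet_Ioi ?_
    · exact (integrable_gaussianPDFReal 0 1).restrict
    · have : Integrable (fun x : ℝ => x * rexp (-(1/2 : ℝ) * x ^ 2)) :=
        integrable_mul_exp_neg_mul_sq (by norm_num)
      have := (this.const_mul ((√(2 * π))⁻¹ / t)).restrict (s := Set.Ioi t)
      refine this.congr ?_
      filter_upwards with x
      ring_nf
    · intro x hx
      rw [hpdf x]
      have hx1 : 1 ≤ x / t := (one_le_div ht).2 (le_of_lt hx)
      nth_rewrite 1 [← one_mul ((√(2 * π))⁻¹ * rexp (-x ^ 2 / 2))]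
      exact mul_le_mul_of_nonneg_right hx1 (by positivity)
  have h2 : ∫ x in Set.Ioi t, (x / t) * ((√(2 * π))⁻¹ * rexp (-x ^ 2 / 2))
      = ((√(2 * π))⁻¹ / t) * rexp (-t ^ 2 / 2) := by
    rw [← tail_exp_integral ht, ← integral_const_mul]
    apply setIntegral_congr_fun measurableSet_Ioi
    intro x _
    ring
  have hπ : (0 : ℝ) < √(2 * π) := Real.sqrt_pos.2 (by positivity)
  have h3 : ((√(2 * π))⁻¹ / t) * rexp (-t ^ 2 / 2) ≤ 1 / (2 * t ^ 2) := by
    rw [div_mul_eq_mul_div, div_le_div_iff₀ ht (by positivity)]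
    have hpos : (0 : ℝ) < 1 + t ^ 2 / 2 := by positivity
    have hexp : 1 + t ^ 2 / 2 ≤ rexp (t ^ 2 / 2) := by
      have := Real.add_one_le_exp (t ^ 2 / 2); linarith
    have he : rexp (-t ^ 2 / 2) ≤ (1 + t ^ 2 / 2)⁻¹ := by
      rw [show -t ^ 2 / 2 = -(t ^ 2 / 2) by ring, Real.exp_neg]
      exact inv_anti₀ hpos hexp
    have key : 2 * t * rexp (-t ^ 2 / 2) ≤ √(2 * π) := by
      have hamgm : Real.sqrt 2 * t ≤ 1 + t ^ 2 / 2 := by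
        nlinarith [sq_nonneg (Real.sqrt 2 * t / 2 - 1), Real.sq_sqrt (by norm_num : (2:ℝ) ≥ 0),
          Real.sqrt_nonneg 2, ht]
      have h2t : 2 * t * rexp (-t ^ 2 / 2) ≤ 2 * t * (1 + t ^ 2 / 2)⁻¹ :=
        mul_le_mul_of_nonneg_left he (by positivity)
      have h2' : 2 * t * (1 + t ^ 2 / 2)⁻¹ ≤ Real.sqrt 2 := by
        rw [mul_inv_le_iff₀ hpos]
        nlinarith [Real.sqrt_nonneg 2, Real.sq_sqrt (by norm_num : (2:ℝ) ≥ 0), hamgm, ht]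
      have hsq : Real.sqrt 2 ≤ Real.sqrt (2 * π) :=
        Real.sqrt_le_sqrt (by nlinarith [Real.pi_gt_three])
      linarith
    calc (√(2 * π))⁻¹ * rexp (-t ^ 2 / 2) * (2 * t ^ 2)
        = t * (2 * t * rexp (-t ^ 2 / 2)) * (√(2 * π))⁻¹ := by ring
      _ ≤ t * √(2 * π) * (√(2 * π))⁻¹ := by
          apply mul_le_mul_of_nonneg_right _ (by positivity)
          exact mul_le_mul_of_nonneg_left key (le_of_lt ht)
      _ = 1 * t := by field_simp
  linarith

open Real in
private lemma cdf_gauss_zero_le : cdf (gaussianReal 0 1) 0 ≤ 1 / 2 := by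
  have h1 : (1 : NNReal) ≠ 0 := one_ne_zero
  rw [cdf_eq_real, measureReal_def, gaussianReal_apply_eq_integral 0 h1,
    ENNReal.toReal_ofReal (integral_nonneg (gaussianPDFReal_nonneg 0 1))]
  have heven : ∀ x : ℝ, gaussianPDFReal 0 1 (-x) = gaussianPDFReal 0 1 x := by
    intro x; simp [gaussianPDFReal]
  have hsym : ∫ x in Set.Iic (0:ℝ), gaussianPDFReal 0 1 x
      = ∫ x in Set.Ioi (0:ℝ), gaussianPDFReal 0 1 x := by
    have h := integral_comp_neg_Ioi (0:ℝ) (gaussianPDFReal 0 1)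
    simp only [heven, neg_zero] at h
    exact h.symm
  have htot : (∫ x in Set.Iic (0:ℝ), gaussianPDFReal 0 1 x)
      + ∫ x in Set.Ioi (0:ℝ), gaussianPDFReal 0 1 x = 1 := by
    rw [← integral_gaussianPDFReal_eq_one 0 h1]
    rw [← MeasureTheory.setIntegral_union (by simp [Set.disjoint_left]) measurableSet_Ioi
      (integrable_gaussianPDFReal 0 1).restrict (integrable_gaussianPDFReal 0 1).restrict]
    rw [Set.Iic_union_Ioi]
    simp [Measure.restrict_univ]
  linarith [hsym, htot]

/-- The (left-continuous) quantile function of the standard normal distribution. -/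
noncomputable def stdNormalQuantile (p : ℝ) : ℝ :=
  sInf {x : ℝ | p ≤ cdf (gaussianReal 0 1) x}

/-- The DRO safety factor dominates the Gaussian quantile: for ε ∈ (0, 1/2),
√((1−ε)/ε) ≥ Φ⁻¹(1−ε). -/
theorem dro_safety_factor_dominates_gaussian_quantile
    (ε : ℝ) (hε : ε ∈ Set.Ioo (0 : ℝ) (1 / 2)) :
    stdNormalQuantile (1 - ε) ≤ Real.sqrt ((1 - ε) / ε) := by
  obtain ⟨hε0, hε2⟩ := hε
  have h1ε : 0 < 1 - ε := by linarith
  set t := Real.sqrt ((1 - ε) / ε) with htdef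
  have htsq : t ^ 2 = (1 - ε) / ε := Real.sq_sqrt (le_of_lt (div_pos h1ε hε0))
  have ht : 0 < t := Real.sqrt_pos.2 (div_pos h1ε hε0)
  have h1 : (1 : NNReal) ≠ 0 := one_ne_zero
  have hmem : 1 - ε ≤ cdf (gaussianReal 0 1) t := by
    have htail : ∫ x in Set.Ioi t, gaussianPDFReal 0 1 x ≤ ε := by
      refine le_trans (gauss_tail_le ht) ?_
      rw [htsq]
      have heq : 1 / (2 * ((1 - ε) / ε)) = ε / (2 * (1 - ε)) := by
        field_simp
      rw [heq, div_le_iff₀ (by linarith)]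
      nlinarith
    have hIic : cdf (gaussianReal 0 1) t
        = 1 - ∫ x in Set.Ioi t, gaussianPDFReal 0 1 x := by
      rw [cdf_eq_real, measureReal_def, gaussianReal_apply_eq_integral 0 h1,
        ENNReal.toReal_ofReal (integral_nonneg (gaussianPDFReal_nonneg 0 1))]
      have htot : (∫ x in Set.Iic t, gaussianPDFReal 0 1 x)
          + ∫ x in Set.Ioi t, gaussianPDFReal 0 1 x = 1 := by
        rw [← integral_gaussianPDFReal_eq_one 0 h1]
        rw [← MeasureTheory.setIntegral_union (by simp [Set.disjoint_left]) measurableSet_Ioi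
          (integrable_gaussianPDFReal 0 1).restrict (integrable_gaussianPDFReal 0 1).restrict]
        rw [Set.Iic_union_Ioi]
        simp [Measure.restrict_univ]
      linarith
    rw [hIic]
    linarith
  have hbdd : BddBelow {x : ℝ | 1 - ε ≤ cdf (gaussianReal 0 1) x} := by
    refine ⟨0, fun x hx => ?_⟩
    by_contra hlt
    push_neg at hlt
    have := monotone_cdf (gaussianReal 0 1) (le_of_lt hlt)
    have h0 := cdf_gauss_zero_le
    simp only [Set.mem_setOf_eq] at hx
    linarith
  exact csInf_le hbdd hmem
end

section
/- (Exact reformulation of a two-sided chance constraint via auxiliary variables, sufficiency direction) Let Z = yᵀξ with ξ having mean μ and covariance Σ, and bounds 0 ≤ Z ≤ u required with probability 1 - ε̄. Suppose there exist x, z ≥ 0 with x ≤ u/2 such that ‖(Σ̄ y, z)‖ ≤ √(ε̄)·(u/2 − x) and |yᵀμ − u/2| ≤ z + x. Then for every distribution of ξ with the given first two moments, P(0 ≤ yᵀξ ≤ u) ≥ 1 − ε̄. -/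
set_option maxHeartbeats 1000000


open MeasureTheory Matrix

/-- Sufficiency direction of the exact distributionally robust reformulation of a
two-sided chance constraint via auxiliary variables (Xie–Ahmed): if there exist
x, z ≥ 0 with x ≤ u/2, ‖(Σ̄ᵀy, z)‖ ≤ √ε̄ (u/2 − x) and |yᵀμ − u/2| ≤ z + x, then
P(0 ≤ yᵀξ ≤ u) ≥ 1 − ε̄ for every distribution with the given first two moments. -/
theorem two_sided_dro_reformulation_sufficient
    {n : ℕ} (εb : ℝ) (hεb : εb ∈ Set.Ioo (0 : ℝ) 1)
    (y μv : Fin n → ℝ) (u : ℝ) (hu : 0 < u)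
    (Sig Sigbar : Matrix (Fin n) (Fin n) ℝ) (hfac : Sigbar * Sigbarᵀ = Sig)
    (x z : ℝ) (hx : 0 ≤ x) (hz : 0 ≤ z) (hxu : x ≤ u / 2)
    (hnorm : Real.sqrt ((∑ k, (Sigbarᵀ.mulVec y k) ^ 2) + z ^ 2)
        ≤ Real.sqrt εb * (u / 2 - x))
    (habs : |y ⬝ᵥ μv - u / 2| ≤ z + x)
    {Ω : Type*} [MeasurableSpace Ω] (P : Measure Ω) [IsProbabilityMeasure P]
    (ξ : Ω → (Fin n → ℝ)) (hmeas : Measurable ξ)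
    (hint1 : ∀ i, Integrable (fun ω => ξ ω i) P)
    (hint2 : ∀ i j, Integrable (fun ω => ξ ω i * ξ ω j) P)
    (hmean : ∀ i, ∫ ω, ξ ω i ∂P = μv i)
    (hcov : ∀ i j, ∫ ω, (ξ ω i - μv i) * (ξ ω j - μv j) ∂P = Sig i j) :
    P {ω | 0 ≤ y ⬝ᵥ ξ ω ∧ y ⬝ᵥ ξ ω ≤ u} ≥ ENNReal.ofReal (1 - εb) := by
  obtain ⟨hε0, hε1⟩ := hεb
  set c : ℝ := u / 2 with hc
  set W : Ω → ℝ := fun ω => ∑ i, y i * ξ ω i with hWdef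
  set m : ℝ := ∑ i, y i * μv i with hmdef
  have hdm : y ⬝ᵥ μv = m := rfl
  rw [hdm] at habs
  show P {ω | 0 ≤ W ω ∧ W ω ≤ u} ≥ ENNReal.ofReal (1 - εb)
  -- basic measurability and integrability
  have hWmeas : Measurable W :=
    Finset.measurable_sum _ fun i _ => ((measurable_pi_apply i).comp hmeas).const_mul (y i)
  have hWint : Integrable W P :=
    integrable_finset_sum _ fun i _ => ((hint1 i).const_mul (y i))
  have hmW : ∫ ω, W ω ∂P = m := by
    rw [integral_finset_sum _ (fun i _ => (hint1 i).const_mul (y i))]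
    simp_rw [integral_const_mul, hmean]
    rfl
  have hgint : ∀ i j, Integrable (fun ω => (ξ ω i - μv i) * (ξ ω j - μv j)) P := by
    intro i j
    have h : (fun ω => (ξ ω i - μv i) * (ξ ω j - μv j))
        = fun ω => ξ ω i * ξ ω j - μv j * ξ ω i - μv i * ξ ω j + μv i * μv j := by
      funext ω; ring
    rw [h]
    exact (((hint2 i j).sub ((hint1 i).const_mul (μv j))).sub
      ((hint1 j).const_mul (μv i))).add (integrable_const _)
  set σ2 : ℝ := ∑ i, ∑ j, y i * y j * Sig i j with hσ2def
  have hterm_int : ∀ i j : Fin n,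
      Integrable (fun ω => (y i * y j) * ((ξ ω i - μv i) * (ξ ω j - μv j))) P :=
    fun i j => (hgint i j).const_mul _
  have hsq : ∀ ω, (W ω - m)^2
      = ∑ i, ∑ j, (y i * y j) * ((ξ ω i - μv i) * (ξ ω j - μv j)) := by
    intro ω
    have hWm : W ω - m = ∑ i, y i * (ξ ω i - μv i) := by
      rw [hWdef, hmdef]
      simp [mul_sub, Finset.sum_sub_distrib]
    rw [hWm, sq, Finset.sum_mul_sum]
    exact Finset.sum_congr rfl fun i _ => Finset.sum_congr rfl fun j _ => by ring
  have hWm2int : Integrable (fun ω => (W ω - m)^2) P := by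
    rw [show (fun ω => (W ω - m)^2)
        = fun ω => ∑ i, ∑ j, (y i * y j) * ((ξ ω i - μv i) * (ξ ω j - μv j)) from funext hsq]
    exact integrable_finset_sum _ fun i _ => integrable_finset_sum _ fun j _ => hterm_int i j
  have hvar : ∫ ω, (W ω - m)^2 ∂P = σ2 := by
    rw [show (fun ω => (W ω - m)^2)
        = fun ω => ∑ i, ∑ j, (y i * y j) * ((ξ ω i - μv i) * (ξ ω j - μv j)) from funext hsq,
      integral_finset_sum _ (fun i _ => integrable_finset_sum _ fun j _ => hterm_int i j)]
    refine Finset.sum_congr rfl fun i _ => ?_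
    rw [integral_finset_sum _ fun j _ => hterm_int i j]
    refine Finset.sum_congr rfl fun j _ => ?_
    rw [integral_const_mul, hcov i j]
  -- the algebraic identity ∑ₖ (Σ̄ᵀy)ₖ² = yᵀΣy
  have hSig : ∀ i j, Sig i j = ∑ k, Sigbar i k * Sigbar j k := by
    intro i j
    rw [← hfac, Matrix.mul_apply]
    simp [Matrix.transpose_apply]
  have hCeq : (∑ k, (Sigbarᵀ.mulVec y k) ^ 2) = σ2 := by
    simp only [Matrix.mulVec, dotProduct, Matrix.transpose_apply, sq, Finset.sum_mul_sum, hσ2def]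
    rw [Finset.sum_comm]
    refine Finset.sum_congr rfl fun i _ => ?_
    rw [Finset.sum_comm]
    refine Finset.sum_congr rfl fun j _ => ?_
    rw [hSig i j, Finset.mul_sum]
    exact Finset.sum_congr rfl fun k _ => by ring
  have hσ2nonneg : 0 ≤ σ2 := hvar ▸ integral_nonneg (fun ω => sq_nonneg _)
  have hkey : σ2 + z^2 ≤ εb * (c - x)^2 := by
    have h1 := pow_le_pow_left₀ (Real.sqrt_nonneg _) hnorm 2
    rw [Real.sq_sqrt (by positivity), mul_pow, Real.sq_sqrt hε0.le] at h1
    rwa [hCeq] at h1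
  rcases eq_or_lt_of_le (sub_nonneg.mpr hxu) with ha | ha
  · -- degenerate case: x = c, so σ2 = 0, z = 0, and W = m a.s. with m ∈ [0, u]
    have hσ0 : σ2 = 0 := by nlinarith [sq_nonneg z]
    have hz0 : z = 0 := by nlinarith
    have habs' := abs_le.mp habs
    have hae : (fun ω => (W ω - m)^2) =ᵐ[P] 0 :=
      (integral_eq_zero_iff_of_nonneg_ae (Filter.Eventually.of_forall fun ω => sq_nonneg _)
        hWm2int).mp (by rw [hvar, hσ0])
    have h1 : ∀ᵐ ω ∂P, ω ∈ {ω | 0 ≤ W ω ∧ W ω ≤ u} := by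
      filter_upwards [hae] with ω hω
      simp only [Pi.zero_apply] at hω
      have h0 : W ω - m = 0 := pow_eq_zero_iff two_ne_zero |>.mp hω
      constructor
      · nlinarith [habs'.1]
      · nlinarith [habs'.2]
    calc ENNReal.ofReal (1 - εb) ≤ 1 := ENNReal.ofReal_le_one.mpr (by linarith)
      _ = P Set.univ := (measure_univ).symm
      _ ≤ P {ω | 0 ≤ W ω ∧ W ω ≤ u} :=
        measure_mono_ae (by filter_upwards [h1] with ω hω _ using hω)
  · -- main case: c - x > 0, Markov's inequality
    set t : ℝ := max (c - x) (min (c + x) m) with htdef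
    have ht1 : c - x ≤ t := le_max_left _ _
    have ht2 : t ≤ c + x := max_le (by linarith) (min_le_left _ _)
    have habs' := abs_le.mp habs
    have hmin1 : min (c + x) m ≤ t := le_max_right _ _
    have htm1 : m - t ≤ z := by
      rcases min_cases (c + x) m with ⟨he, hcm⟩ | ⟨he, hcm⟩ <;> rw [he] at hmin1 <;>
        linarith [habs'.2]
    have htm2 : t - m ≤ z := by
      have h1 : c - x ≤ m + z := by linarith [habs'.1]
      have h2 : min (c + x) m ≤ m + z := le_trans (min_le_right _ _) (by linarith)
      have := max_le h1 h2
      linarith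
    have hWt : ∀ ω, (W ω - t)^2
        = (W ω - m)^2 + (2*(m - t)) * (W ω - m) + (m - t)^2 := fun ω => by ring
    have hint_lin : Integrable (fun ω => (2*(m - t)) * (W ω - m)) P :=
      (hWint.sub (integrable_const m)).const_mul _
    have hWtint : Integrable (fun ω => (W ω - t)^2) P := by
      simp_rw [hWt]
      exact (hWm2int.add hint_lin).add (integrable_const _)
    have hsum : Integrable (fun ω => (W ω - m)^2 + 2*(m - t) * (W ω - m)) P :=
      hWm2int.add hint_lin
    have hWtvar : ∫ ω, (W ω - t)^2 ∂P = σ2 + (m - t)^2 := by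
      simp_rw [hWt]
      rw [integral_add (f := fun ω => (W ω - m)^2 + 2*(m - t) * (W ω - m))
          (g := fun _ => (m - t)^2) hsum (integrable_const _),
        integral_add (f := fun ω => (W ω - m)^2) (g := fun ω => 2*(m - t) * (W ω - m))
          hWm2int hint_lin, integral_const_mul,
        integral_sub hWint (integrable_const m), hmW, hvar]
      simp
    have hsubset : {ω | 0 ≤ W ω ∧ W ω ≤ u}ᶜ ⊆ {ω | (c - x)^2 ≤ (W ω - t)^2} := by
      intro ω hω
      simp only [Set.mem_compl_iff, Set.mem_setOf_eq, not_and, not_le] at hω ⊢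
      rcases lt_or_ge (W ω) 0 with h | h
      · nlinarith [mul_nonneg (by linarith : (0:ℝ) ≤ t - W ω - (c - x))
          (by linarith : (0:ℝ) ≤ t - W ω + (c - x))]
      · have hgt := hω h
        have hcu : c + c = u := by rw [hc]; ring
        nlinarith [mul_nonneg (by linarith : (0:ℝ) ≤ W ω - t - (c - x))
          (by linarith : (0:ℝ) ≤ W ω - t + (c - x))]
    have hmarkov := mul_meas_ge_le_integral_of_nonneg
      (Filter.Eventually.of_forall fun ω => sq_nonneg (W ω - t)) hWtint ((c - x)^2)
    rw [hWtvar] at hmarkov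
    have h2 : σ2 + (m - t)^2 ≤ εb * (c - x)^2 := by
      nlinarith [mul_nonneg (by linarith : (0:ℝ) ≤ z - (m - t))
        (by linarith : (0:ℝ) ≤ z + (m - t))]
    have ha2 : (0:ℝ) < (c - x)^2 := by positivity
    have hb : (P {ω | (c - x)^2 ≤ (W ω - t)^2}).toReal ≤ εb := by
      have h3 : (c - x)^2 * (P {ω | (c - x)^2 ≤ (W ω - t)^2}).toReal
          ≤ (c - x)^2 * εb := by
        calc (c - x)^2 * (P {ω | (c - x)^2 ≤ (W ω - t)^2}).toReal
            ≤ σ2 + (m - t)^2 := hmarkov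
          _ ≤ εb * (c - x)^2 := h2
          _ = (c - x)^2 * εb := by ring
      exact le_of_mul_le_mul_left h3 ha2
    have hPS : P {ω | (c - x)^2 ≤ (W ω - t)^2} ≤ ENNReal.ofReal εb :=
      (ENNReal.le_ofReal_iff_toReal_le (measure_ne_top _ _) hε0.le).mpr hb
    have hcomp : P {ω | 0 ≤ W ω ∧ W ω ≤ u}ᶜ ≤ ENNReal.ofReal εb :=
      le_trans (measure_mono hsubset) hPS
    have hgoodm : MeasurableSet {ω | 0 ≤ W ω ∧ W ω ≤ u} :=
      (measurableSet_le measurable_const hWmeas).inter (measurableSet_le hWmeas measurable_const)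
    have heq : P {ω | 0 ≤ W ω ∧ W ω ≤ u} = 1 - P {ω | 0 ≤ W ω ∧ W ω ≤ u}ᶜ := by
      have h := prob_compl_eq_one_sub (μ := P) hgoodm.compl
      rwa [compl_compl] at h
    calc ENNReal.ofReal (1 - εb) = 1 - ENNReal.ofReal εb := by
          rw [ENNReal.ofReal_sub 1 hε0.le, ENNReal.ofReal_one]
      _ ≤ 1 - P {ω | 0 ≤ W ω ∧ W ω ≤ u}ᶜ := tsub_le_tsub_left hcomp 1
      _ = P {ω | 0 ≤ W ω ∧ W ω ≤ u} := heq.symm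
end
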